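/- Let G be a group acting by ring automorphisms on a (possibly noncommutative) ring R. Let P be a prime two-sided ideal of R that is maximal among the prime two-sided ideals Q of R satisfying Q:G = P:G (i.e., no prime two-sided ideal Q with Q:G = P:G properly contains P). If P:G is strictly contained in the intersection of all G-prime two-sided ideals of R that properly contain P:G (where the intersection over the empty family is R), then P is strictly contained in the intersection of all prime two-sided ideals of R that properly contain P (where again the empty intersection is R). In other words, if P:G is a locally closed point of G-Spec R, then every prime that is maximal in its G-stratum is a locally closed point of Spec R. -/
import Mathlib


section Defs

variable {G R : Type*} [Group G] [Ring R] [MulSemiringAction G R]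

/-- The image `g·I` of a two-sided ideal `I` under the ring automorphism `x ↦ g • x`;
as a set it is `{g • x : x ∈ I}`, realised as the preimage under `x ↦ g⁻¹ • x`. -/
def idealSMul (g : G) (I : TwoSidedIdeal R) : TwoSidedIdeal R :=
  TwoSidedIdeal.comap (MulSemiringAction.toRingHom G R g⁻¹) I

/-- `I : G = ⋂_{g ∈ G} g·I`, the largest `G`-stable two-sided ideal contained in `I`. -/
def idealColonG (I : TwoSidedIdeal R) : TwoSidedIdeal R :=
  ⨅ g : G, idealSMul g I

/-- A two-sided ideal is `G`-stable if `g·I = I` for all `g ∈ G`. -/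
def IsGStable (I : TwoSidedIdeal R) : Prop :=
  ∀ g : G, idealSMul g I = I

/-- A two-sided ideal `I` is `G`-prime if it is `G`-stable, proper, and for all
`G`-stable two-sided ideals `A`, `B`, `A·B ⊆ I` implies `A ⊆ I` or `B ⊆ I`. -/
def IsGPrime (I : TwoSidedIdeal R) : Prop :=
  IsGStable (G := G) I ∧ I ≠ ⊤ ∧
    ∀ A B : TwoSidedIdeal R, IsGStable (G := G) A → IsGStable (G := G) B →
      (∀ a ∈ A, ∀ b ∈ B, a * b ∈ I) → A ≤ I ∨ B ≤ I

/-- A two-sided ideal `P` is prime if `P ≠ R` and `A·B ⊆ P` implies `A ⊆ P` or `B ⊆ P`. -/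
def IsPrimeTwoSided (P : TwoSidedIdeal R) : Prop :=
  P ≠ ⊤ ∧ ∀ A B : TwoSidedIdeal R, (∀ a ∈ A, ∀ b ∈ B, a * b ∈ P) → A ≤ P ∨ B ≤ P

end Defs

section Aux
variable {G R : Type*} [Group G] [Ring R] [MulSemiringAction G R]

lemma mem_idealSMul {g : G} {I : TwoSidedIdeal R} {x : R} :
    x ∈ idealSMul g I ↔ g⁻¹ • x ∈ I := TwoSidedIdeal.mem_comap _

lemma idealSMul_mono {g : G} {I J : TwoSidedIdeal R} (h : I ≤ J) :
    idealSMul g I ≤ idealSMul g J := fun x hx =>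
  mem_idealSMul.2 (h (mem_idealSMul.1 hx))

lemma idealSMul_one (I : TwoSidedIdeal R) : idealSMul (1 : G) I = I := by
  ext x; simp [mem_idealSMul]

lemma idealSMul_mul (g h : G) (I : TwoSidedIdeal R) :
    idealSMul g (idealSMul h I) = idealSMul (g * h) I := by
  ext x; simp [mem_idealSMul, mul_smul]

lemma mem_idealColonG {I : TwoSidedIdeal R} {x : R} :
    x ∈ idealColonG (G := G) I ↔ ∀ g : G, g⁻¹ • x ∈ I := by
  simp [idealColonG, TwoSidedIdeal.mem_iInf, mem_idealSMul]

lemma idealColonG_le (I : TwoSidedIdeal R) : idealColonG (G := G) I ≤ I := fun x hx => by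
  simpa using mem_idealColonG.1 hx 1

lemma idealColonG_mono {I J : TwoSidedIdeal R} (h : I ≤ J) :
    idealColonG (G := G) I ≤ idealColonG (G := G) J := fun x hx =>
  mem_idealColonG.2 fun g => h (mem_idealColonG.1 hx g)

lemma isGStable_colonG (I : TwoSidedIdeal R) : IsGStable (G := G) (idealColonG (G := G) I) := by
  intro g
  ext x
  simp only [mem_idealSMul, mem_idealColonG]
  constructor
  · intro h k
    simpa [mul_smul] using h (g⁻¹ * k)
  · intro h k
    simpa [mul_smul] using h (g * k)

lemma mem_of_isGStable {J : TwoSidedIdeal R} (hJ : IsGStable (G := G) J) {x : R} (hx : x ∈ J)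
    (g : G) : g⁻¹ • x ∈ J := by
  rw [← hJ g] at hx
  exact mem_idealSMul.1 hx

lemma isGPrime_colonG {Q : TwoSidedIdeal R} (hQ : IsPrimeTwoSided Q) :
    IsGPrime (G := G) (idealColonG (G := G) Q) := by
  refine ⟨isGStable_colonG Q, ?_, ?_⟩
  · intro h
    exact hQ.1 (top_le_iff.1 (h ▸ idealColonG_le Q))
  · intro A B hA hB hAB
    rcases hQ.2 A B (fun a ha b hb => idealColonG_le Q (hAB a ha b hb)) with h | h
    · left
      intro x hx
      exact mem_idealColonG.2 fun g => h (mem_of_isGStable hA hx g)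
    · right
      intro x hx
      exact mem_idealColonG.2 fun g => h (mem_of_isGStable hB hx g)
end Aux



/-- If a prime `P` is maximal within its `G`-stratum `{Q prime : Q:G = P:G}` and `P:G` is a
locally closed point of `G`-Spec `R`, then `P` is a locally closed point of `Spec R`. -/
theorem stmt9 {G R : Type*} [Group G] [Ring R] [MulSemiringAction G R]
    (P : TwoSidedIdeal R) (hP : IsPrimeTwoSided P)
    (hmax : ∀ Q : TwoSidedIdeal R, IsPrimeTwoSided Q →
      idealColonG (G := G) Q = idealColonG (G := G) P → P ≤ Q → Q = P)
    (hlc : idealColonG (G := G) P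
      < sInf {J : TwoSidedIdeal R | IsGPrime (G := G) J ∧ idealColonG (G := G) P < J}) :
    P < sInf {Q : TwoSidedIdeal R | IsPrimeTwoSided Q ∧ P < Q} := by
  obtain ⟨x, hxInf, hxP⟩ := SetLike.exists_of_lt hlc
  obtain ⟨g, hg⟩ : ∃ g : G, g⁻¹ • x ∉ P := by
    by_contra h
    push_neg at h
    exact hxP (mem_idealColonG.2 fun g => idealColonG_le P (mem_idealColonG.2
      fun k => by simpa [mul_smul] using h (g * k)))
  set y := g⁻¹ • x with hy
  have hyQ : ∀ Q : TwoSidedIdeal R, IsPrimeTwoSided Q → P < Q → y ∈ Q := by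
    intro Q hQ hPQ
    have hle : idealColonG (G := G) P ≤ idealColonG (G := G) Q := idealColonG_mono hPQ.le
    have hne : idealColonG (G := G) Q ≠ idealColonG (G := G) P := by
      intro h
      exact hPQ.ne' (hmax Q hQ h hPQ.le)
    have hmem : idealColonG (G := G) Q ∈
        {J : TwoSidedIdeal R | IsGPrime (G := G) J ∧ idealColonG (G := G) P < J} :=
      ⟨isGPrime_colonG hQ, lt_of_le_of_ne hle (Ne.symm hne)⟩
    have hxQ : x ∈ idealColonG (G := G) Q := (TwoSidedIdeal.mem_sInf _).1 hxInf _ hmem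
    exact idealColonG_le Q (mem_of_isGStable (isGStable_colonG Q) hxQ g)
  refine lt_of_le_of_ne (le_sInf fun Q hQ => hQ.2.le) ?_
  intro h
  exact hg (h ▸ (TwoSidedIdeal.mem_sInf _).2 fun Q hQ => hyQ Q hQ.1 hQ.2)
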